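/- Let X and Y be n×n Hermitian complex matrices such that X ≤ (U Y Uᴴ + V Y Vᴴ)/2 in the Loewner order for some n×n unitary matrices U and V. Then for every j ≥ 1 with 2j−1 ≤ n, λ_{2j-1}(X) ≤ λ_j(Y), where λ_j(·) denotes the j-th largest eigenvalue counted with multiplicity. -/

import Mathlib

open Matrix
open scoped ComplexOrder

/-- The `j`-th largest eigenvalue of a Hermitian matrix (`0`-indexed, so `eigDesc hA ⟨0, _⟩`
is the largest), counted with multiplicity. -/
noncomputable def eigDesc {n : ℕ} {A : Matrix (Fin n) (Fin n) ℂ} (hA : A.IsHermitian)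
    (j : Fin n) : ℝ :=
  hA.eigenvalues (Tuple.sort hA.eigenvalues j.rev)

/-- Applying a real function to a Hermitian matrix via the functional calculus yields a
Hermitian matrix. -/
lemma isHermitian_cfc {n : ℕ} {A : Matrix (Fin n) (Fin n) ℂ} (hA : A.IsHermitian)
    (f : ℝ → ℝ) : (hA.cfc f).IsHermitian := by
  rw [← hA.cfc_eq]
  exact cfc_predicate f A

lemma isHermitian_half_smul {n : ℕ} {X : Matrix (Fin n) (Fin n) ℂ} (hX : X.IsHermitian) :
    ((2 : ℝ)⁻¹ • X).IsHermitian := by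
  show _ = _
  rw [Matrix.conjTranspose_smul, star_trivial, hX.eq]

lemma isHermitian_sum_conj {m n : ℕ} {A : Fin m → Matrix (Fin n) (Fin n) ℂ}
    (Z : Fin m → Matrix (Fin n) (Fin n) ℂ) (hA : ∀ i, (A i).IsHermitian) :
    (∑ i, (Z i)ᴴ * A i * Z i).IsHermitian := by
  show _ = _
  rw [Matrix.conjTranspose_sum]
  exact Finset.sum_congr rfl fun i _ => (isHermitian_conjTranspose_mul_mul (Z i) (hA i)).eq

/-! Write `λ_i` for the `i`-th largest eigenvalue. If `X ≤ a B + b C` with `a, b ≥ 0`, take the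
span of the eigenvectors of `X` with eigenvalue `≥ λ_{i+k-1}(X)` (dimension `≥ i + k - 1`) and
those of `B`, resp. `C`, with eigenvalue `≤ λ_i(B)`, resp. `≤ λ_k(C)` (dimensions `≥ n - i + 1`,
`≥ n - k + 1`). The dimensions add up to more than `2n`, so the three subspaces share a unit
vector `x`, and `λ_{i+k-1}(X) ≤ ⟪x, X x⟫ ≤ a ⟪x, B x⟫ + b ⟪x, C x⟫ ≤ a λ_i(B) + b λ_k(C)`
(with the `0`-indexed `eigDesc`, the index on the left becomes `i + k`).
The theorem is the case `i = k = j`, `a = b = 1/2`, `B = U Y Uᴴ`, `C = V Y Vᴴ`: conjugation by a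
unitary does not change the characteristic polynomial, hence not the eigenvalues. -/

open scoped InnerProductSpace

theorem OrthonormalBasis.repr_eq_zero_of_mem_span {𝕜 E ι : Type*} [RCLike 𝕜]
    [NormedAddCommGroup E] [InnerProductSpace 𝕜 E] [Fintype ι] (b : OrthonormalBasis ι 𝕜 E)
    {s : Set ι} {x : E} (hx : x ∈ Submodule.span 𝕜 (b '' s)) {i : ι} (hi : i ∉ s) :
    b.repr x i = 0 := by
  rw [← b.coe_toBasis] at hx
  rw [← b.coe_toBasis_repr_apply]
  exact Finsupp.notMem_support_iff.mp fun h =>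
    hi (b.toBasis.repr_support_subset_of_mem_span s hx h)

theorem OrthonormalBasis.finrank_span_image {𝕜 E ι : Type*} [RCLike 𝕜] [NormedAddCommGroup E]
    [InnerProductSpace 𝕜 E] [Fintype ι] (b : OrthonormalBasis ι 𝕜 E) (s : Finset ι) :
    Module.finrank 𝕜 (Submodule.span 𝕜 (b '' s)) = s.card := by
  rw [Set.image_eq_range, finrank_span_eq_card, ← Set.toFinset_card, Finset.toFinset_coe]
  exact b.orthonormal.linearIndependent.comp _ Subtype.val_injective

theorem Submodule.exists_ne_zero_mem_inf_inf {K V : Type*} [DivisionRing K] [AddCommGroup V]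
    [Module K V] [FiniteDimensional K V] (W₁ W₂ W₃ : Submodule K V)
    (h : 2 * Module.finrank K V <
      Module.finrank K W₁ + Module.finrank K W₂ + Module.finrank K W₃) :
    ∃ x ≠ 0, x ∈ W₁ ∧ x ∈ W₂ ∧ x ∈ W₃ := by
  have finrank_add_le (p q : Submodule K V) :
      Module.finrank K p + Module.finrank K q ≤
        Module.finrank K V + Module.finrank K (p ⊓ q : Submodule K V) := by
    rw [← Submodule.finrank_sup_add_finrank_inf_eq]
    exact Nat.add_le_add_right (Submodule.finrank_le _) _
  have h₁₂ := finrank_add_le W₁ W₂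
  have h₁₂₃ := finrank_add_le (W₁ ⊓ W₂) W₃
  have hne : W₁ ⊓ W₂ ⊓ W₃ ≠ ⊥ := by
    intro hbot
    rw [← Submodule.finrank_eq_zero] at hbot
    omega
  obtain ⟨x, ⟨⟨hx₁, hx₂⟩, hx₃⟩, hx⟩ := (Submodule.ne_bot_iff _).mp hne
  exact ⟨x, hx, hx₁, hx₂, hx₃⟩

theorem Matrix.charpoly_mul_mul_conjTranspose_of_mem_unitaryGroup {R ι : Type*} [CommRing R]
    [StarRing R] [Fintype ι] [DecidableEq ι] {U : Matrix ι ι R} (hU : U ∈ unitaryGroup ι R)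
    (M : Matrix ι ι R) : (U * M * Uᴴ).charpoly = M.charpoly := by
  rw [← star_eq_conjTranspose, Matrix.mul_assoc, charpoly_mul_comm, Matrix.mul_assoc,
    (mem_unitaryGroup_iff').mp hU, Matrix.mul_one]

theorem Matrix.PosSemidef.re_inner_toEuclideanLin_le {𝕜 ι : Type*} [RCLike 𝕜] [Fintype ι]
    [DecidableEq ι] {M X : Matrix ι ι 𝕜} (h : (M - X).PosSemidef) (x : EuclideanSpace 𝕜 ι) :
    RCLike.re ⟪x, toEuclideanLin X x⟫_𝕜 ≤ RCLike.re ⟪x, toEuclideanLin M x⟫_𝕜 := by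
  have := (isPositive_toEuclideanLin_iff.mpr h).re_inner_nonneg_right x
  rwa [map_sub, LinearMap.sub_apply, inner_sub_right, map_sub, sub_nonneg] at this

namespace Matrix.IsHermitian

variable {𝕜 ι : Type*} [RCLike 𝕜] [Fintype ι] [DecidableEq ι] {A : Matrix ι ι 𝕜}

theorem toEuclideanLin_eigenvectorBasis (hA : A.IsHermitian) (i : ι) :
    toEuclideanLin A (hA.eigenvectorBasis i) = (hA.eigenvalues i : 𝕜) • hA.eigenvectorBasis i := by
  rw [toLpLin_apply, hA.mulVec_eigenvectorBasis, RCLike.real_smul_eq_coe_smul (K := 𝕜)]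
  rfl

theorem eigenvectorBasis_repr_toEuclideanLin (hA : A.IsHermitian) (x : EuclideanSpace 𝕜 ι)
    (i : ι) :
    hA.eigenvectorBasis.repr (toEuclideanLin A x) i =
      hA.eigenvalues i * hA.eigenvectorBasis.repr x i := by
  rw [OrthonormalBasis.repr_apply_apply, OrthonormalBasis.repr_apply_apply,
    ← isSymmetric_toEuclideanLin_iff.mpr hA, toEuclideanLin_eigenvectorBasis, inner_smul_left,
    RCLike.conj_ofReal]

theorem re_inner_toEuclideanLin_eq_sum (hA : A.IsHermitian) (x : EuclideanSpace 𝕜 ι) :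
    RCLike.re ⟪x, toEuclideanLin A x⟫_𝕜 =
      ∑ i, hA.eigenvalues i * ‖hA.eigenvectorBasis.repr x i‖ ^ 2 := by
  rw [← hA.eigenvectorBasis.repr.inner_map_map, PiLp.inner_apply, map_sum]
  refine Finset.sum_congr rfl fun i _ => ?_
  rw [eigenvectorBasis_repr_toEuclideanLin, RCLike.inner_apply, mul_assoc, RCLike.mul_conj,
    ← RCLike.ofReal_pow, RCLike.re_ofReal_mul, RCLike.ofReal_re]

theorem re_inner_toEuclideanLin_le_of_mem_span (hA : A.IsHermitian) {s : Set ι} {t : ℝ}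
    (hs : ∀ i ∈ s, hA.eigenvalues i ≤ t) {x : EuclideanSpace 𝕜 ι}
    (hx : x ∈ Submodule.span 𝕜 (hA.eigenvectorBasis '' s)) :
    RCLike.re ⟪x, toEuclideanLin A x⟫_𝕜 ≤ t * ‖x‖ ^ 2 := by
  rw [hA.re_inner_toEuclideanLin_eq_sum, ← hA.eigenvectorBasis.repr.norm_map,
    EuclideanSpace.norm_sq_eq, Finset.mul_sum]
  refine Finset.sum_le_sum fun i _ => ?_
  by_cases hi : i ∈ s
  · exact mul_le_mul_of_nonneg_right (hs i hi) (sq_nonneg _)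
  · simp [hA.eigenvectorBasis.repr_eq_zero_of_mem_span hx hi]

theorem le_re_inner_toEuclideanLin_of_mem_span (hA : A.IsHermitian) {s : Set ι} {t : ℝ}
    (hs : ∀ i ∈ s, t ≤ hA.eigenvalues i) {x : EuclideanSpace 𝕜 ι}
    (hx : x ∈ Submodule.span 𝕜 (hA.eigenvectorBasis '' s)) :
    t * ‖x‖ ^ 2 ≤ RCLike.re ⟪x, toEuclideanLin A x⟫_𝕜 := by
  rw [hA.re_inner_toEuclideanLin_eq_sum, ← hA.eigenvectorBasis.repr.norm_map,
    EuclideanSpace.norm_sq_eq, Finset.mul_sum]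
  refine Finset.sum_le_sum fun i _ => ?_
  by_cases hi : i ∈ s
  · exact mul_le_mul_of_nonneg_right (hs i hi) (sq_nonneg _)
  · simp [hA.eigenvectorBasis.repr_eq_zero_of_mem_span hx hi]

end Matrix.IsHermitian

section eigDesc

variable {n : ℕ} {A : Matrix (Fin n) (Fin n) ℂ}

theorem eigDesc_eq_of_charpoly_eq {B : Matrix (Fin n) (Fin n) ℂ} (hA : A.IsHermitian)
    (hB : B.IsHermitian) (h : A.charpoly = B.charpoly) (k : Fin n) :
    eigDesc hA k = eigDesc hB k := by
  unfold eigDesc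
  rw [(hA.eigenvalues_eq_eigenvalues_iff hB).mpr h]

theorem card_le_card_filter_eigDesc_le (hA : A.IsHermitian) (k : Fin n) :
    k + 1 ≤ (Finset.univ.filter fun i => eigDesc hA k ≤ hA.eigenvalues i).card := by
  have hsub : (Finset.Ici k.rev).image (Tuple.sort hA.eigenvalues) ⊆
      Finset.univ.filter fun i => eigDesc hA k ≤ hA.eigenvalues i := by
    simp only [Finset.subset_iff, Finset.mem_image, Finset.mem_Ici, Finset.mem_filter,
      Finset.mem_univ, true_and, forall_exists_index, and_imp]
    rintro _ m hm rfl
    exact Tuple.monotone_sort hA.eigenvalues hm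
  refine le_of_eq_of_le ?_ (Finset.card_le_card hsub)
  rw [Finset.card_image_of_injective _ (Tuple.sort hA.eigenvalues).injective, Fin.card_Ici,
    Fin.val_rev]
  omega

theorem card_le_card_filter_le_eigDesc (hA : A.IsHermitian) (k : Fin n) :
    n - k ≤ (Finset.univ.filter fun i => hA.eigenvalues i ≤ eigDesc hA k).card := by
  have hsub : (Finset.Iic k.rev).image (Tuple.sort hA.eigenvalues) ⊆
      Finset.univ.filter fun i => hA.eigenvalues i ≤ eigDesc hA k := by
    simp only [Finset.subset_iff, Finset.mem_image, Finset.mem_Iic, Finset.mem_filter,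
      Finset.mem_univ, true_and, forall_exists_index, and_imp]
    rintro _ m hm rfl
    exact Tuple.monotone_sort hA.eigenvalues hm
  refine le_of_eq_of_le ?_ (Finset.card_le_card hsub)
  rw [Finset.card_image_of_injective _ (Tuple.sort hA.eigenvalues).injective, Fin.card_Iic,
    Fin.val_rev]
  omega

theorem exists_le_finrank_forall_eigDesc_mul_le (hA : A.IsHermitian) (k : Fin n) :
    ∃ W : Submodule ℂ (EuclideanSpace ℂ (Fin n)), k + 1 ≤ Module.finrank ℂ W ∧
      ∀ x ∈ W, eigDesc hA k * ‖x‖ ^ 2 ≤ RCLike.re ⟪x, toEuclideanLin A x⟫_ℂ := by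
  refine ⟨Submodule.span ℂ (hA.eigenvectorBasis ''
    (Finset.univ.filter fun i => eigDesc hA k ≤ hA.eigenvalues i)), ?_, fun x hx => ?_⟩
  · rw [hA.eigenvectorBasis.finrank_span_image]
    exact card_le_card_filter_eigDesc_le hA k
  · exact hA.le_re_inner_toEuclideanLin_of_mem_span (fun i hi => (Finset.mem_filter.mp hi).2) hx

theorem exists_le_finrank_forall_le_eigDesc_mul (hA : A.IsHermitian) (k : Fin n) :
    ∃ W : Submodule ℂ (EuclideanSpace ℂ (Fin n)), n - k ≤ Module.finrank ℂ W ∧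
      ∀ x ∈ W, RCLike.re ⟪x, toEuclideanLin A x⟫_ℂ ≤ eigDesc hA k * ‖x‖ ^ 2 := by
  refine ⟨Submodule.span ℂ (hA.eigenvectorBasis ''
    (Finset.univ.filter fun i => hA.eigenvalues i ≤ eigDesc hA k)), ?_, fun x hx => ?_⟩
  · rw [hA.eigenvectorBasis.finrank_span_image]
    exact card_le_card_filter_le_eigDesc hA k
  · exact hA.re_inner_toEuclideanLin_le_of_mem_span (fun i hi => (Finset.mem_filter.mp hi).2) hx

theorem eigDesc_le_of_posSemidef {X B C : Matrix (Fin n) (Fin n) ℂ} (hX : X.IsHermitian)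
    (hB : B.IsHermitian) (hC : C.IsHermitian) {a b : ℝ} (ha : 0 ≤ a) (hb : 0 ≤ b)
    (h : (a • B + b • C - X).PosSemidef) {i k l : Fin n} (hl : (l : ℕ) = i + k) :
    eigDesc hX l ≤ a * eigDesc hB i + b * eigDesc hC k := by
  obtain ⟨W₁, hW₁, hX₁⟩ := exists_le_finrank_forall_eigDesc_mul_le hX l
  obtain ⟨W₂, hW₂, hB₂⟩ := exists_le_finrank_forall_le_eigDesc_mul hB i
  obtain ⟨W₃, hW₃, hC₃⟩ := exists_le_finrank_forall_le_eigDesc_mul hC k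
  obtain ⟨x, hx, hx₁, hx₂, hx₃⟩ := Submodule.exists_ne_zero_mem_inf_inf W₁ W₂ W₃ (by
    rw [finrank_euclideanSpace_fin]
    omega)
  have hquad : RCLike.re ⟪x, toEuclideanLin X x⟫_ℂ ≤
      a * RCLike.re ⟪x, toEuclideanLin B x⟫_ℂ + b * RCLike.re ⟪x, toEuclideanLin C x⟫_ℂ := by
    simpa [inner_add_right, ← Complex.coe_smul] using h.re_inner_toEuclideanLin_le x
  refine le_of_mul_le_mul_right ?_ (by positivity : 0 < ‖x‖ ^ 2)
  calc eigDesc hX l * ‖x‖ ^ 2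
      ≤ RCLike.re ⟪x, toEuclideanLin X x⟫_ℂ := hX₁ x hx₁
    _ ≤ a * RCLike.re ⟪x, toEuclideanLin B x⟫_ℂ + b * RCLike.re ⟪x, toEuclideanLin C x⟫_ℂ := hquad
    _ ≤ a * (eigDesc hB i * ‖x‖ ^ 2) + b * (eigDesc hC k * ‖x‖ ^ 2) := by
      gcongr
      exacts [hB₂ x hx₂, hC₃ x hx₃]
    _ = (a * eigDesc hB i + b * eigDesc hC k) * ‖x‖ ^ 2 := by ring

end eigDesc

theorem eig_le_of_le_mean_unitary_conj
    {n : ℕ} (X Y : Matrix (Fin n) (Fin n) ℂ) (hX : X.IsHermitian) (hY : Y.IsHermitian)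
    (U V : Matrix (Fin n) (Fin n) ℂ)
    (hU : U ∈ Matrix.unitaryGroup (Fin n) ℂ) (hV : V ∈ Matrix.unitaryGroup (Fin n) ℂ)
    (hle : ((2 : ℝ)⁻¹ • (U * Y * Uᴴ + V * Y * Vᴴ) - X).PosSemidef)
    (j : ℕ) (hj : 1 ≤ j) (hjn : 2 * j - 1 ≤ n) :
    eigDesc hX ⟨2 * j - 1 - 1, by omega⟩ ≤ eigDesc hY ⟨j - 1, by omega⟩ := by
  have hUY := isHermitian_mul_mul_conjTranspose U hY
  have hVY := isHermitian_mul_mul_conjTranspose V hY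
  calc eigDesc hX ⟨2 * j - 1 - 1, by omega⟩
      ≤ 2⁻¹ * eigDesc hUY ⟨j - 1, by omega⟩ + 2⁻¹ * eigDesc hVY ⟨j - 1, by omega⟩ :=
        eigDesc_le_of_posSemidef hX hUY hVY (by norm_num) (by norm_num)
          (by rwa [smul_add] at hle) (by dsimp only; omega)
    _ = eigDesc hY ⟨j - 1, by omega⟩ := by
      rw [eigDesc_eq_of_charpoly_eq hUY hY
          (charpoly_mul_mul_conjTranspose_of_mem_unitaryGroup hU Y),
        eigDesc_eq_of_charpoly_eq hVY hY
          (charpoly_mul_mul_conjTranspose_of_mem_unitaryGroup hV Y)]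
      ring
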